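/- arXiv:1909.05420 — 4 statements merged into one kernel-verified Lean document; each statement's English description precedes it below -/
import Mathlib

section
/- Let x = (x_1,…,x_n) and y = (y_1,…,y_n) be nonnegative real vectors with ∑ x_i = ∑ y_i, ∑ x_i² = ∑ y_i², and such that y takes only two values: y_i = a for i ≤ n-1 and y_n = b with a ≤ b. Then ∏_i x_i ≤ ∏_i y_i, i.e., ∏ x_i ≤ a^{n-1} b. -/
open BigOperators

/-!
For `0 < a ≤ b` there is a quadratic `Q v = log a + (v - a) / a + c (v - a) ^ 2`, tangent to `log`
at `a` and meeting it again at `b`, that lies above `log` on `(0, b]`: the derivative of `Q - log`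
has the sign of `(v - a) (1 + 2 a c v)`, and `1 + 2 a² c ≥ 0` because on `[a, ∞)` the quadratic
with `1 + 2 a² c = 0` lies below `log` (compare at `b`). The two moment conditions give
`∑ Q (x i) = ∑ Q (y i)`, and Cauchy–Schwarz on the other `n` entries gives `x i ≤ b`; hence
`∑ log (x i) ≤ ∑ log (y i)`. If `a = 0` the moments force `(∑ x i)² = ∑ (x i)²`, so two entries
of `x` have zero product.
-/

open Finset Real Set

lemma monotoneOn_Icc_of_hasDerivAt {f f' : ℝ → ℝ} {p q : ℝ}
    (hf : ∀ v ∈ Icc p q, HasDerivAt f (f' v) v) (hf' : ∀ v ∈ Ioo p q, 0 ≤ f' v) :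
    MonotoneOn f (Icc p q) :=
  monotoneOn_of_hasDerivWithinAt_nonneg (convex_Icc p q)
    (fun v hv ↦ (hf v hv).continuousAt.continuousWithinAt)
    (fun v hv ↦ (hf v (interior_subset hv)).hasDerivWithinAt) (by rwa [interior_Icc])

lemma antitoneOn_Icc_of_hasDerivAt {f f' : ℝ → ℝ} {p q : ℝ}
    (hf : ∀ v ∈ Icc p q, HasDerivAt f (f' v) v) (hf' : ∀ v ∈ Ioo p q, f' v ≤ 0) :
    AntitoneOn f (Icc p q) :=
  antitoneOn_of_hasDerivWithinAt_nonpos (convex_Icc p q)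
    (fun v hv ↦ (hf v hv).continuousAt.continuousWithinAt)
    (fun v hv ↦ (hf v (interior_subset hv)).hasDerivWithinAt) (by rwa [interior_Icc])

noncomputable def logTangentQuad (a c v : ℝ) : ℝ := log a + a⁻¹ * (v - a) + c * (v - a) ^ 2

section logTangentQuad

variable {a c b u : ℝ}

lemma hasDerivAt_logTangentQuad_sub_log (ha : 0 < a) {v : ℝ} (hv : 0 < v) :
    HasDerivAt (fun v ↦ logTangentQuad a c v - log v)
      ((v - a) * (1 + 2 * a * c * v) / (a * v)) v := by
  have hlin : HasDerivAt (fun v ↦ v - a) 1 v := (hasDerivAt_id v).sub_const a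
  have hquad : HasDerivAt (fun v ↦ (v - a) ^ 2) (2 * (v - a)) v :=
    (hlin.fun_pow 2).congr_deriv (by ring)
  have h := (((hlin.const_mul a⁻¹).const_add (log a)).fun_add (hquad.const_mul c)).fun_sub
    (hasDerivAt_log hv.ne')
  exact h.congr_deriv (by field_simp; ring)

lemma logTangentQuad_self : logTangentQuad a c a = log a := by
  simp [logTangentQuad]

lemma log_le_logTangentQuad (ha : 0 < a) (hc : 0 ≤ 1 + 2 * a ^ 2 * c)
    (hb : log b ≤ logTangentQuad a c b) (hu : 0 < u) (hub : u ≤ b) :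
    log u ≤ logTangentQuad a c u := by
  set G := fun v ↦ logTangentQuad a c v - log v
  suffices 0 ≤ G u by simpa [G] using this
  have hGa : G a = 0 := by simp [G, logTangentQuad_self]
  have hG {p q : ℝ} (hp : 0 < p) :
      ∀ v ∈ Icc p q, HasDerivAt G ((v - a) * (1 + 2 * a * c * v) / (a * v)) v :=
    fun v hv ↦ hasDerivAt_logTangentQuad_sub_log ha (hp.trans_le hv.1)
  rcases le_total u a with hua | hau
  · have := antitoneOn_Icc_of_hasDerivAt (q := a) (hG hu) fun v hv ↦ by
      have : 0 < v := hu.trans hv.1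
      have : 0 ≤ 1 + 2 * a * c * v := by nlinarith [hv.2]
      exact div_nonpos_of_nonpos_of_nonneg (by nlinarith [hv.2]) (by positivity)
    simpa [hGa] using this ⟨le_rfl, hua⟩ ⟨hua, le_rfl⟩ hua
  rcases le_or_gt 0 (1 + 2 * a * c * u) with hcu | hcu
  · have := monotoneOn_Icc_of_hasDerivAt (q := u) (hG ha) fun v hv ↦ by
      have : 0 < v := ha.trans hv.1
      have : 0 ≤ 1 + 2 * a * c * v := by nlinarith [hv.1, hv.2]
      exact div_nonneg (by nlinarith [hv.1]) (by positivity)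
    simpa [hGa] using this ⟨le_rfl, hau⟩ ⟨hau, le_rfl⟩ hau
  · have := antitoneOn_Icc_of_hasDerivAt (q := b) (hG hu) fun v hv ↦ by
      have : 0 < v := hu.trans hv.1
      have : 1 + 2 * a * c * v < 0 := by nlinarith [hv.1]
      exact div_nonpos_of_nonpos_of_nonneg (by nlinarith [hv.1]) (by positivity)
    have hGb : 0 ≤ G b := by simpa [G] using hb
    linarith [this ⟨le_rfl, hub⟩ ⟨hub, le_rfl⟩ hub]

lemma logTangentQuad_le_log (ha : 0 < a) (hc : 1 + 2 * a ^ 2 * c ≤ 0) (hab : a ≤ b) :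
    logTangentQuad a c b ≤ log b := by
  have hanti := antitoneOn_Icc_of_hasDerivAt (p := a) (q := b)
    (fun v hv ↦ hasDerivAt_logTangentQuad_sub_log (c := c) ha (ha.trans_le hv.1)) fun v hv ↦ by
      have : 0 < v := ha.trans hv.1
      have : 1 + 2 * a * c * v ≤ 0 := by nlinarith [hv.1]
      exact div_nonpos_of_nonpos_of_nonneg (by nlinarith [hv.1]) (by positivity)
  simpa [logTangentQuad_self] using hanti ⟨le_rfl, hab⟩ ⟨hab, le_rfl⟩ hab

lemma exists_logTangentQuad_eq_log_and_log_le (ha : 0 < a) (hab : a ≤ b) :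
    ∃ c, logTangentQuad a c b = log b ∧ ∀ u, 0 < u → u ≤ b → log u ≤ logTangentQuad a c u := by
  obtain rfl | hab := hab.eq_or_lt
  · exact ⟨0, logTangentQuad_self, fun u hu hub ↦
      log_le_logTangentQuad ha (by simp) logTangentQuad_self.ge hu hub⟩
  have hba : 0 < (b - a) ^ 2 := by nlinarith
  set c := (log b - log a - a⁻¹ * (b - a)) / (b - a) ^ 2
  have hcb : logTangentQuad a c b = log b := by
    simp only [logTangentQuad, c]
    field_simp
    ring
  refine ⟨c, hcb, fun u hu hub ↦ log_le_logTangentQuad ha ?_ hcb.ge hu hub⟩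
  have hlow := logTangentQuad_le_log ha (c := -1 / (2 * a ^ 2)) (by field_simp; norm_num) hab.le
  rw [← hcb] at hlow
  simp only [logTangentQuad, add_le_add_iff_left] at hlow
  have := le_of_mul_le_mul_right hlow hba
  field_simp at this
  nlinarith

end logTangentQuad

@[to_additive]
lemma prod_apply_eq_pow_mul {α M : Type*} [CommMonoid M] {n : ℕ} {y : Fin (n + 1) → α} {a b : α}
    (hya : ∀ i, i ≠ Fin.last n → y i = a) (hyb : y (Fin.last n) = b) (f : α → M) :
    ∏ i, f (y i) = f a ^ n * f b := by
  simp [Fin.prod_univ_castSucc, hyb, hya _ (Fin.castSucc_ne_last _)]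

lemma sum_quadratic_eq_of_moments_eq {ι : Type*} {s : Finset ι} {x y : ι → ℝ}
    (h1 : ∑ i ∈ s, x i = ∑ i ∈ s, y i) (h2 : ∑ i ∈ s, x i ^ 2 = ∑ i ∈ s, y i ^ 2)
    (p q r m : ℝ) :
    ∑ i ∈ s, (p + q * (x i - m) + r * (x i - m) ^ 2) =
      ∑ i ∈ s, (p + q * (y i - m) + r * (y i - m) ^ 2) := by
  have expand : ∀ z : ℝ, p + q * (z - m) + r * (z - m) ^ 2 =
      (p - q * m + r * m ^ 2) + (q - 2 * r * m) * z + r * z ^ 2 := fun z ↦ by ring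
  simp only [expand, sum_add_distrib, ← mul_sum, h1, h2]

lemma le_of_sum_eq_of_sum_sq_eq {n : ℕ} {x : Fin (n + 1) → ℝ} {a b : ℝ} (hab : a ≤ b)
    (h1 : ∑ i, x i = n * a + b) (h2 : ∑ i, x i ^ 2 = n * a ^ 2 + b ^ 2) (j : Fin (n + 1)) :
    x j ≤ b := by
  rw [Fin.sum_univ_succAbove _ j] at h1 h2
  have hcs := sq_sum_le_card_mul_sum_sq (s := univ) (f := fun i ↦ x (j.succAbove i))
  simp only [card_univ, Fintype.card_fin] at hcs
  rw [show ∑ i, x (j.succAbove i) = n * a + b - x j by linarith,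
    show ∑ i, x (j.succAbove i) ^ 2 = n * a ^ 2 + b ^ 2 - x j ^ 2 by linarith] at hcs
  by_contra! hb
  have hn : (0 : ℝ) ≤ n := n.cast_nonneg
  nlinarith [mul_nonneg (mul_nonneg hn (sub_nonneg.2 hab)) (sub_pos.2 hb).le,
    mul_nonneg hn (sq_nonneg (x j - b)), sq_pos_of_pos (sub_pos.2 hb)]

lemma mul_eq_zero_of_sq_sum_eq_sum_sq {ι : Type*} [Fintype ι] {x : ι → ℝ} (hx : ∀ i, 0 ≤ x i)
    (h : (∑ i, x i) ^ 2 = ∑ i, x i ^ 2) {i j : ι} (hij : i ≠ j) : x i * x j = 0 := by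
  classical
  have hterm : ∀ k, 0 ≤ x k * (∑ i, x i - x k) := fun k ↦
    mul_nonneg (hx k) (sub_nonneg.2 (single_le_sum (fun k _ ↦ hx k) (mem_univ k)))
  have hzero : ∑ k, x k * (∑ i, x i - x k) = 0 := by
    simp only [mul_sub, sum_sub_distrib, ← sum_mul, ← sq, h, sub_self]
  have hi := (sum_eq_zero_iff_of_nonneg fun k _ ↦ hterm k).1 hzero i (mem_univ i)
  have hij' : x i + x j ≤ ∑ k, x k := by
    rw [← sum_pair hij]
    exact sum_le_univ_sum_of_nonneg hx
  nlinarith [mul_nonneg (hx i) (hx j), hx i]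

lemma prod_le_of_two_moments_of_pos {n : ℕ} {x y : Fin (n + 1) → ℝ} {a b : ℝ}
    (hx : ∀ i, 0 ≤ x i) (hsum : ∑ i, x i = ∑ i, y i)
    (hsumsq : ∑ i, (x i) ^ 2 = ∑ i, (y i) ^ 2)
    (hya : ∀ i, i ≠ Fin.last n → y i = a) (hyb : y (Fin.last n) = b)
    (ha : 0 < a) (hab : a ≤ b) :
    ∏ i, x i ≤ a ^ n * b := by
  obtain ⟨c, hcb, hlog⟩ := exists_logTangentQuad_eq_log_and_log_le ha hab
  have hxb : ∀ i, x i ≤ b := le_of_sum_eq_of_sum_sq_eq hab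
    (by simpa [hsum] using sum_apply_eq_nsmul_add hya hyb id)
    (by simpa [hsumsq] using sum_apply_eq_nsmul_add hya hyb (· ^ 2))
  have hb : 0 < b := ha.trans_le hab
  by_cases hx0 : ∃ i, x i = 0
  · obtain ⟨i, hi⟩ := hx0
    rw [prod_eq_zero (mem_univ i) hi]
    exact mul_nonneg (pow_nonneg ha.le n) hb.le
  push Not at hx0
  have hxpos : ∀ i, 0 < x i := fun i ↦ (hx i).lt_of_ne' (hx0 i)
  rw [← log_le_log_iff (prod_pos fun i _ ↦ hxpos i) (mul_pos (pow_pos ha n) hb),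
    log_prod fun i _ ↦ hx0 i, log_mul (pow_pos ha n).ne' hb.ne', log_pow]
  calc ∑ i, log (x i)
      ≤ ∑ i, logTangentQuad a c (x i) := sum_le_sum fun i _ ↦ hlog _ (hxpos i) (hxb i)
    _ = ∑ i, logTangentQuad a c (y i) := sum_quadratic_eq_of_moments_eq hsum hsumsq _ _ _ _
    _ = n * log a + log b := by
      rw [sum_apply_eq_nsmul_add hya hyb, logTangentQuad_self, hcb, nsmul_eq_mul]

theorem prod_le_of_two_moments (n : ℕ) (x y : Fin (n + 1) → ℝ) (a b : ℝ)
    (hx : ∀ i, 0 ≤ x i) (hy : ∀ i, 0 ≤ y i)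
    (hsum : ∑ i, x i = ∑ i, y i)
    (hsumsq : ∑ i, (x i) ^ 2 = ∑ i, (y i) ^ 2)
    (hya : ∀ i, i ≠ Fin.last n → y i = a)
    (hyb : y (Fin.last n) = b)
    (hab : a ≤ b) :
    ∏ i, x i ≤ a ^ n * b := by
  rcases lt_or_ge 0 a with ha | ha
  · exact prod_le_of_two_moments_of_pos hx hsum hsumsq hya hyb ha hab
  rcases n with _ | n
  · simp_all
  obtain rfl : a = 0 := le_antisymm ha (hya 0 Fin.last_pos.ne ▸ hy 0)
  have hy1 := sum_apply_eq_nsmul_add hya hyb id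
  have hy2 := sum_apply_eq_nsmul_add hya hyb (· ^ 2)
  have hprod : x 0 * x (Fin.last _) = 0 := mul_eq_zero_of_sq_sum_eq_sum_sq hx
    (by simp_all) Fin.last_pos.ne
  rcases mul_eq_zero.1 hprod with h | h <;> simp [prod_eq_zero (mem_univ _) h]
end

section
/- Let R be an n×n correlation matrix, r_2 = sqrt((∑_{i≠j} r_{ij}²)/(n(n-1))), and R̂ the matrix with unit diagonal and all off-diagonal entries equal to r_2. Then det R ≤ det R̂ = (1-r_2)^{n-1}(1+(n-1)r_2). -/
/-!
Let `λ₁, …, λₙ ≥ 0` be the eigenvalues of `R`. Since `R` has unit diagonal, `∑ λᵢ = n` and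
`∑ (λᵢ - 1)² = ∑_{i ≠ j} rᵢⱼ² = n (n - 1) r₂²`, so `λ` has the same first two moments as the
spectrum `(x, …, x, y)` of `R̂`, with `x = 1 - r₂` (multiplicity `n - 1`) and `y = 1 + (n - 1) r₂`.
Some `λᵢ ≤ x`, since otherwise `∑ (λᵢ - x)² < (∑ (λᵢ - x))²`; so `x ≥ 0`, and `x > 0` unless
`det R = 0`. Every `λᵢ ≤ y`, as `(λᵢ - x)² ≤ ∑ (λⱼ - x)² = (y - x)²`. Take the quadratic `q`
tangent to `log` at `x` with `q y = log y`; then `log ≤ q` on `(0, y]`, and `∑ q λᵢ` depends only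
on the first two moments, so `∑ log λᵢ ≤ ∑ q λᵢ = (n - 1) log x + log y`, i.e.
`det R ≤ xⁿ⁻¹ y = det R̂`.
-/

open Real Set Finset Matrix

section LogMajorant

variable {c : ℝ}

lemma hasDerivAt_sub_one_add_mul_sq_sub_log {u : ℝ} (hu : u ≠ 0) :
    HasDerivAt (fun t ↦ t - 1 + c * (t - 1) ^ 2 - log t) ((u - 1) * (1 + 2 * c * u) / u) u := by
  refine ((((hasDerivAt_id' u).sub_const 1).add
    ((((hasDerivAt_id' u).sub_const 1).pow 2).const_mul c)).sub (hasDerivAt_log hu)).congr_deriv ?_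
  field_simp
  ring

lemma continuousOn_sub_one_add_mul_sq_sub_log :
    ContinuousOn (fun t ↦ t - 1 + c * (t - 1) ^ 2 - log t) (Ioi 0) :=
  fun _ hu ↦ (hasDerivAt_sub_one_add_mul_sq_sub_log (ne_of_gt hu)).continuousAt.continuousWithinAt

lemma monotoneOn_sub_one_add_mul_sq_sub_log {a b : ℝ} (ha : 0 < a)
    (h : ∀ s ∈ Ioo a b, 0 ≤ (s - 1) * (1 + 2 * c * s)) :
    MonotoneOn (fun t ↦ t - 1 + c * (t - 1) ^ 2 - log t) (Icc a b) := by
  refine monotoneOn_of_hasDerivWithinAt_nonneg (convex_Icc a b)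
    (continuousOn_sub_one_add_mul_sq_sub_log.mono fun s hs ↦ ha.trans_le hs.1)
    (fun s hs ↦ (hasDerivAt_sub_one_add_mul_sq_sub_log ?_).hasDerivWithinAt) fun s hs ↦ ?_
  all_goals rw [interior_Icc] at hs
  · exact (ha.trans hs.1).ne'
  · exact div_nonneg (h s hs) (ha.trans hs.1).le

lemma antitoneOn_sub_one_add_mul_sq_sub_log {a b : ℝ} (ha : 0 < a)
    (h : ∀ s ∈ Ioo a b, (s - 1) * (1 + 2 * c * s) ≤ 0) :
    AntitoneOn (fun t ↦ t - 1 + c * (t - 1) ^ 2 - log t) (Icc a b) := by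
  refine antitoneOn_of_hasDerivWithinAt_nonpos (convex_Icc a b)
    (continuousOn_sub_one_add_mul_sq_sub_log.mono fun s hs ↦ ha.trans_le hs.1)
    (fun s hs ↦ (hasDerivAt_sub_one_add_mul_sq_sub_log ?_).hasDerivWithinAt) fun s hs ↦ ?_
  all_goals rw [interior_Icc] at hs
  · exact (ha.trans hs.1).ne'
  · exact div_nonpos_of_nonpos_of_nonneg (h s hs) (ha.trans hs.1).le

/-- The gap `g u = u - 1 + c (u - 1)² - log u` vanishes at `1` and at `Y`, decreases on `(0, 1]`,
and on `[1, ∞)` first increases and then decreases (`1 + 2 c u` changes sign once). -/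
lemma log_le_sub_one_add_mul_sq {Y u : ℝ} (hc : c ≤ 0) (hc' : 0 ≤ 1 + 2 * c)
    (hY : log Y = Y - 1 + c * (Y - 1) ^ 2) (hu : 0 < u) (huY : u ≤ Y) :
    log u ≤ u - 1 + c * (u - 1) ^ 2 := by
  set g : ℝ → ℝ := fun t ↦ t - 1 + c * (t - 1) ^ 2 - log t
  suffices 0 ≤ g u by simpa [g] using this
  have hg1 : g 1 = 0 := by simp [g]
  have hgY : g Y = 0 := by simp [g, hY]
  rcases le_or_gt u 1 with hu1 | hu1
  · refine hg1 ▸ antitoneOn_sub_one_add_mul_sq_sub_log hu (fun s hs ↦ ?_)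
      (left_mem_Icc.2 hu1) (right_mem_Icc.2 hu1) hu1
    exact mul_nonpos_of_nonpos_of_nonneg (by linarith [hs.2]) (by nlinarith [hs.1, hs.2])
  rcases le_or_gt 0 (1 + 2 * c * u) with hcu | hcu
  · refine hg1 ▸ monotoneOn_sub_one_add_mul_sq_sub_log one_pos (fun s hs ↦ ?_)
      (left_mem_Icc.2 hu1.le) (right_mem_Icc.2 hu1.le) hu1.le
    exact mul_nonneg (by linarith [hs.1]) (by nlinarith [hs.1, hs.2])
  · refine hgY ▸ antitoneOn_sub_one_add_mul_sq_sub_log hu (fun s hs ↦ ?_)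
      (left_mem_Icc.2 huY) (right_mem_Icc.2 huY) huY
    exact mul_nonpos_of_nonneg_of_nonpos (by linarith [hs.1]) (by nlinarith [hs.1, hs.2])

end LogMajorant

lemma exists_log_le_sub_one_add_mul_sq {Y : ℝ} (hY : 1 ≤ Y) :
    ∃ c, log Y = Y - 1 + c * (Y - 1) ^ 2 ∧
      ∀ u, 0 < u → u ≤ Y → log u ≤ u - 1 + c * (u - 1) ^ 2 := by
  rcases hY.eq_or_lt with rfl | hY
  · exact ⟨0, by simp, fun u hu _ ↦ by simpa using log_le_sub_one_of_pos hu⟩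
  set c := (log Y - (Y - 1)) / (Y - 1) ^ 2
  have hYc : c * (Y - 1) ^ 2 = log Y - (Y - 1) := div_mul_cancel₀ _ (by nlinarith)
  have hc : c ≤ 0 := div_nonpos_of_nonpos_of_nonneg
    (by linarith [log_le_sub_one_of_pos (zero_lt_one.trans hY)]) (sq_nonneg _)
  -- `2 s / (s + 2) ≤ log (1 + s)` is stronger than `s - s² / 2 ≤ log (1 + s)` for `s ≥ 0`
  have hc' : 0 ≤ 1 + 2 * c := by
    have hlog := le_log_one_add_of_nonneg (sub_nonneg.2 hY.le)
    rw [add_sub_cancel, div_le_iff₀ (by linarith)] at hlog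
    have h : 0 ≤ (1 + 2 * c) * (Y - 1) ^ 2 := by
      nlinarith [pow_pos (sub_pos.2 hY) 3]
    exact nonneg_of_mul_nonneg_left h (by nlinarith)
  exact ⟨c, by linarith, fun u hu huY ↦ log_le_sub_one_add_mul_sq hc hc' (by linarith) hu huY⟩

section Moments

variable {ι : Type*} [Fintype ι]

lemma sum_log_le_of_moments {l : ι → ℝ} {x y : ℝ} (hl : ∀ i, 0 < l i) (hx : 0 < x)
    (hxy : x ≤ y) (h₁ : ∑ i, (l i - x) = y - x) (h₂ : ∑ i, (l i - x) ^ 2 = (y - x) ^ 2) :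
    ∑ i, log (l i) ≤ (Fintype.card ι - 1) * log x + log y := by
  have hle : ∀ i, l i ≤ y := fun i ↦ by
    have : (l i - x) ^ 2 ≤ (y - x) ^ 2 :=
      h₂ ▸ single_le_sum (fun j _ ↦ sq_nonneg (l j - x)) (mem_univ i)
    linarith [(abs_le_of_sq_le_sq' this (sub_nonneg.2 hxy)).2]
  obtain ⟨c, hcy, hc⟩ := exists_log_le_sub_one_add_mul_sq ((one_le_div hx).2 hxy)
  have rescale : ∀ t, t / x - 1 + c * (t / x - 1) ^ 2 = (t - x) / x + c / x ^ 2 * (t - x) ^ 2 :=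
    fun t ↦ by field_simp
  have hlog : ∀ i, log (l i) ≤ log x + ((l i - x) / x + c / x ^ 2 * (l i - x) ^ 2) := fun i ↦ by
    have := hc (l i / x) (div_pos (hl i) hx) (div_le_div_of_nonneg_right (hle i) hx.le)
    rw [log_div (hl i).ne' hx.ne', rescale] at this
    linarith
  calc ∑ i, log (l i) ≤ ∑ i, (log x + ((l i - x) / x + c / x ^ 2 * (l i - x) ^ 2)) :=
        sum_le_sum fun i _ ↦ hlog i
    _ = Fintype.card ι * log x + ((y - x) / x + c / x ^ 2 * (y - x) ^ 2) := by
        rw [sum_add_distrib, sum_add_distrib, ← sum_div, ← mul_sum, h₁, h₂, sum_const, card_univ,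
          nsmul_eq_mul]
    _ = (Fintype.card ι - 1) * log x + log y := by
        rw [← rescale, ← hcy, log_div (hx.trans_le hxy).ne' hx.ne']
        ring

lemma exists_nonpos_of_sum_sq_eq_sq_sum [Nontrivial ι] {a : ι → ℝ}
    (h : ∑ i, a i ^ 2 = (∑ i, a i) ^ 2) : ∃ i, a i ≤ 0 := by
  by_contra! hpos
  refine h.not_lt ?_
  rw [sq, sum_mul]
  refine sum_lt_sum_of_nonempty univ_nonempty fun i _ ↦ ?_
  obtain ⟨j, hji⟩ := exists_ne i
  rw [sq]
  exact mul_lt_mul_of_pos_left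
    (single_lt_sum hji (mem_univ i) (mem_univ j) (hpos j) fun k _ _ ↦ (hpos k).le) (hpos i)

lemma prod_le_pow_mul_of_moments [Nontrivial ι] {l : ι → ℝ} {x y : ℝ} (hl : ∀ i, 0 ≤ l i)
    (hxy : x ≤ y) (h₁ : ∑ i, (l i - x) = y - x) (h₂ : ∑ i, (l i - x) ^ 2 = (y - x) ^ 2) :
    ∏ i, l i ≤ x ^ (Fintype.card ι - 1) * y := by
  obtain ⟨k, hk⟩ := exists_nonpos_of_sum_sq_eq_sq_sum (a := fun i ↦ l i - x) (by rw [h₁, h₂])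
  have hx : 0 ≤ x := (hl k).trans (sub_nonpos.1 hk)
  by_cases hzero : ∃ i, l i = 0
  · obtain ⟨i, hi⟩ := hzero
    rw [prod_eq_zero (mem_univ i) hi]
    exact mul_nonneg (pow_nonneg hx _) (hx.trans hxy)
  push Not at hzero
  have hpos : ∀ i, 0 < l i := fun i ↦ (hl i).lt_of_ne' (hzero i)
  have hx' : 0 < x := (hpos k).trans_le (sub_nonpos.1 hk)
  have hy : 0 < y := hx'.trans_le hxy
  rw [← log_le_log_iff (prod_pos fun i _ ↦ hpos i) (by positivity), log_prod fun i _ ↦ (hpos i).ne',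
    log_mul (by positivity) hy.ne', log_pow, Nat.cast_pred Fintype.card_pos]
  exact sum_log_le_of_moments hpos hx' hxy h₁ h₂

lemma prod_le_of_sum_eq_card_of_sum_sub_one_sq_eq [Nontrivial ι] {l : ι → ℝ} {m : ℝ}
    (hl : ∀ i, 0 ≤ l i) (hm : 0 ≤ m) (h₁ : ∑ i, l i = Fintype.card ι)
    (h₂ : ∑ i, (l i - 1) ^ 2 = Fintype.card ι * (Fintype.card ι - 1) * m ^ 2) :
    ∏ i, l i ≤ (1 - m) ^ (Fintype.card ι - 1) * (1 + (Fintype.card ι - 1) * m) := by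
  have hn : (1 : ℝ) ≤ Fintype.card ι := by exact_mod_cast Fintype.card_pos
  refine prod_le_pow_mul_of_moments hl (by nlinarith) ?_ ?_
  · simp only [sum_sub_distrib, h₁, sum_const, card_univ, nsmul_eq_mul]
    ring
  · have h : ∀ i, (l i - (1 - m)) ^ 2 = (l i - 1) ^ 2 + 2 * m * l i - 2 * m + m ^ 2 :=
      fun i ↦ by ring
    simp only [h, sum_add_distrib, sum_sub_distrib, ← mul_sum, h₁, h₂, sum_const, card_univ,
      nsmul_eq_mul]
    ring

end Moments

section Matrices

variable {ι : Type*} [Fintype ι] [DecidableEq ι]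

lemma Matrix.IsHermitian.trace_mul_self {𝕜 : Type*} [RCLike 𝕜] {A : Matrix ι ι 𝕜}
    (hA : A.IsHermitian) : (A * A).trace = ∑ i, (hA.eigenvalues i : 𝕜) ^ 2 := by
  conv_lhs => rw [hA.spectral_theorem, ← map_mul, Unitary.conjStarAlgAut_apply, trace_mul_cycle,
    Unitary.coe_star_mul_self, one_mul, diagonal_mul_diagonal, trace_diagonal]
  simp [sq]

lemma Matrix.IsHermitian.sum_eigenvalues_sq {A : Matrix ι ι ℝ} (hA : A.IsHermitian) :
    ∑ i, hA.eigenvalues i ^ 2 = ∑ i, ∑ j, A i j ^ 2 := by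
  have h := hA.trace_mul_self
  simp only [RCLike.ofReal_real_eq_id, id] at h
  have hsymm : ∀ i j, A j i = A i j := fun i j ↦ by simpa using hA.apply i j
  rw [← h]
  simp [trace, mul_apply, hsymm, sq]

lemma Matrix.IsHermitian.sum_eigenvalues_of_diag_eq_one {R : Matrix ι ι ℝ} (hR : R.IsHermitian)
    (hdiag : ∀ i, R i i = 1) : ∑ i, hR.eigenvalues i = Fintype.card ι := by
  simpa [trace, hdiag] using hR.trace_eq_sum_eigenvalues.symm

lemma Matrix.IsHermitian.sum_eigenvalues_sub_one_sq_of_diag_eq_one {R : Matrix ι ι ℝ}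
    (hR : R.IsHermitian) (hdiag : ∀ i, R i i = 1) :
    ∑ i, (hR.eigenvalues i - 1) ^ 2 = ∑ i, ∑ j ∈ univ.erase i, R i j ^ 2 := by
  have h₁ := hR.sum_eigenvalues_of_diag_eq_one hdiag
  have h₂ : ∑ i, hR.eigenvalues i ^ 2 = Fintype.card ι + ∑ i, ∑ j ∈ univ.erase i, R i j ^ 2 := by
    rw [hR.sum_eigenvalues_sq, ← card_univ, ← nsmul_one, ← sum_const, ← sum_add_distrib]
    refine sum_congr rfl fun i _ ↦ ?_
    rw [← add_sum_erase _ _ (mem_univ i), hdiag, one_pow]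
  simp only [sub_sq, sum_add_distrib, sum_sub_distrib, ← sum_mul, ← mul_sum, h₁, h₂]
  simp
  ring

variable (ι) in
def equicorrelation (r : ℝ) : Matrix ι ι ℝ := of fun i j ↦ if i = j then 1 else r

lemma continuous_det_equicorrelation : Continuous fun r ↦ (equicorrelation ι r).det := by
  have h : ∀ r, equicorrelation ι r = (1 - r) • (1 : Matrix ι ι ℝ) + of fun _ _ ↦ r := fun r ↦ by
    ext i j
    by_cases h : i = j <;> simp [equicorrelation, one_apply, h]
  simp_rw [h]
  exact Continuous.matrix_det (by fun_prop)

/-- For `r ≠ 1` this is the matrix determinant lemma; `r = 1` follows by continuity. -/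
lemma det_equicorrelation [Nonempty ι] (r : ℝ) :
    (equicorrelation ι r).det =
      (1 - r) ^ (Fintype.card ι - 1) * (1 + (Fintype.card ι - 1) * r) := by
  revert r
  rw [← funext_iff]
  refine continuous_det_equicorrelation.ext_on (dense_compl_singleton 1) (by fun_prop) fun r hr ↦ ?_
  have hr : 1 - r ≠ 0 := sub_ne_zero.2 (Ne.symm hr)
  have h : equicorrelation ι r = (1 - r) •
      (1 + replicateCol Unit (fun _ : ι ↦ (1 : ℝ)) * replicateRow Unit (fun _ ↦ r / (1 - r))) := by
    ext i j
    by_cases h : i = j <;> simp [equicorrelation, one_apply, mul_apply, h] <;> field_simp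
    ring
  dsimp only
  rw [h, det_smul, det_one_add_replicateCol_mul_replicateRow,
    ← pow_sub_one_mul Fintype.card_ne_zero]
  simp only [dotProduct, mul_one, sum_const, card_univ, nsmul_eq_mul]
  field_simp
  ring

end Matrices

theorem det_le_det_Rhat (n : ℕ) (hn : 2 ≤ n) (R : Matrix (Fin n) (Fin n) ℝ)
    (hpsd : R.PosSemidef) (hdiag : ∀ i, R i i = 1)
    (r₂ : ℝ)
    (hr₂ : r₂ = Real.sqrt ((∑ i, ∑ j ∈ Finset.univ.erase i, (R i j) ^ 2) / (n * (n - 1))))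
    (Rhat : Matrix (Fin n) (Fin n) ℝ)
    (hRhat : Rhat = Matrix.of fun i j => if i = j then 1 else r₂) :
    R.det ≤ Rhat.det ∧ Rhat.det = (1 - r₂) ^ (n - 1) * (1 + (n - 1 : ℝ) * r₂) := by
  have : Nontrivial (Fin n) := Fin.nontrivial_iff_two_le.2 hn
  have hdet : Rhat.det = (1 - r₂) ^ (n - 1) * (1 + (n - 1 : ℝ) * r₂) := by
    have h := det_equicorrelation (ι := Fin n) r₂
    rw [Fintype.card_fin] at h
    exact hRhat ▸ h
  have hR := hpsd.isHermitian
  have hn' : (0 : ℝ) < n * (n - 1) := by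
    have : (2 : ℝ) ≤ n := by exact_mod_cast hn
    nlinarith
  have hS : ∑ i, (hR.eigenvalues i - 1) ^ 2 = n * (n - 1) * r₂ ^ 2 := by
    rw [hR.sum_eigenvalues_sub_one_sq_of_diag_eq_one hdiag, hr₂, sq_sqrt (by positivity),
      mul_div_cancel₀ _ hn'.ne']
  refine ⟨?_, hdet⟩
  rw [hdet, hR.det_eq_prod_eigenvalues]
  simpa using prod_le_of_sum_eq_card_of_sum_sub_one_sq_eq hpsd.eigenvalues_nonneg
    (hr₂ ▸ sqrt_nonneg _) (by simpa using hR.sum_eigenvalues_of_diag_eq_one hdiag)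
    (by simpa using hS)
end

section
/- Olkin's inequality: Let R be an n×n correlation matrix and r_1 = (∑_{i≠j} r_{ij})/(n(n-1)). Then det R ≤ (1-r_1)^{n-1}(1+(n-1)r_1). -/
/-!
Let `λᵢ ≥ 0` be the eigenvalues of `R`, so that `∑ λᵢ = tr R = n` and `det R = ∏ λᵢ`. The
Rayleigh quotient of the all-ones vector is `μ = 1 + (n - 1) r₁`, a weighted mean of the `λᵢ`;
hence some eigenvalue satisfies `(λⱼ - μ) (1 - μ) ≤ 0` (the least one if `μ ≤ 1`, the greatest
otherwise). AM-GM on the other eigenvalues gives `det R ≤ λⱼ ((n - λⱼ) / (n - 1)) ^ (n - 1)`, and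
`t ↦ t (n - t) ^ (n - 1)` increases on `[0, 1]` and decreases on `[1, n]`, so `λⱼ` may be
replaced by `μ`.
-/

open Matrix Finset

theorem Real.prod_le_arith_mean_pow {ι : Type*} (s : Finset ι) {z : ι → ℝ}
    (hz : ∀ i ∈ s, 0 ≤ z i) : ∏ i ∈ s, z i ≤ ((∑ i ∈ s, z i) / #s) ^ #s := by
  rcases s.eq_empty_or_nonempty with rfl | hs
  · simp
  have hcard : (0 : ℝ) < #s := by exact_mod_cast hs.card_pos
  have hprod : 0 ≤ ∏ i ∈ s, z i := prod_nonneg hz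
  have amgm := Real.geom_mean_le_arith_mean s (fun _ ↦ 1) z (fun _ _ ↦ zero_le_one)
    (by simpa using hcard) hz
  simp only [Real.rpow_one, sum_const, nsmul_eq_mul, mul_one, one_mul] at amgm
  calc ∏ i ∈ s, z i = ((∏ i ∈ s, z i) ^ (#s : ℝ)⁻¹) ^ #s := by
        rw [← Real.rpow_natCast, ← Real.rpow_mul hprod, inv_mul_cancel₀ hcard.ne', Real.rpow_one]
    _ ≤ _ := by gcongr

theorem Real.prod_le_mul_arith_mean_pow_erase {ι : Type*} [DecidableEq ι] {s : Finset ι}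
    {z : ι → ℝ} (hz : ∀ i ∈ s, 0 ≤ z i) {j : ι} (hj : j ∈ s) :
    ∏ i ∈ s, z i ≤ z j * ((∑ i ∈ s, z i - z j) / (#s - 1 : ℕ)) ^ (#s - 1) := by
  rw [← mul_prod_erase s z hj, ← add_sum_erase s z hj, add_sub_cancel_left,
    ← card_erase_of_mem hj]
  exact mul_le_mul_of_nonneg_left
    (Real.prod_le_arith_mean_pow _ fun i hi ↦ hz i (mem_of_mem_erase hi)) (hz j hj)

theorem Real.mul_pow_le_arith_mean_pow {p q : ℝ} (hp : 0 ≤ p) (hq : 0 ≤ q) (m : ℕ) :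
    p * q ^ m ≤ ((p + m * q) / (m + 1)) ^ (m + 1) := by
  simpa [Fin.prod_cons, Fin.sum_cons] using
    Real.prod_le_arith_mean_pow (univ : Finset (Fin (m + 1))) (z := Fin.cons p fun _ ↦ q)
      (fun i _ ↦ Fin.cases hp (fun _ ↦ hq) i)

theorem mul_sub_pow_le_mul_sub_pow (m : ℕ) {a b : ℝ} (ha : 0 ≤ a) (ha' : a ≤ m + 1)
    (hb : 0 ≤ b) (hb' : b ≤ m + 1) (hab : (a - b) * (1 - b) ≤ 0) :
    a * (m + 1 - a) ^ m ≤ b * (m + 1 - b) ^ m := by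
  rcases hb.eq_or_lt with rfl | hb
  · obtain rfl : a = 0 := by nlinarith
    rfl
  rcases hb'.eq_or_lt with rfl | hb'
  · rcases m.eq_zero_or_pos with rfl | hm
    · simpa using ha'
    obtain rfl : a = m + 1 := by
      have : (1 : ℝ) ≤ m := by exact_mod_cast hm
      nlinarith
    rfl
  -- AM-GM for `a (m + 1 - b)` and `m` copies of `b (m + 1 - a)`, whose mean is at most
  -- `b (m + 1 - b)` exactly when `(a - b) (1 - b) ≤ 0`.
  have hmean : (a * (m + 1 - b) + m * (b * (m + 1 - a))) / (m + 1) ≤ b * (m + 1 - b) := by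
    rw [div_le_iff₀ (by positivity)]
    nlinarith
  have amgm := (Real.mul_pow_le_arith_mean_pow (p := a * (m + 1 - b)) (q := b * (m + 1 - a))
    (by nlinarith) (by nlinarith) m).trans (pow_le_pow_left₀ (by positivity) hmean _)
  refine le_of_mul_le_mul_right ?_ (mul_pos (pow_pos hb m) (sub_pos.mpr hb'))
  calc a * (m + 1 - a) ^ m * (b ^ m * (m + 1 - b))
      = a * (m + 1 - b) * (b * (m + 1 - a)) ^ m := by rw [mul_pow]; ring
    _ ≤ (b * (m + 1 - b)) ^ (m + 1) := amgm
    _ = b * (m + 1 - b) ^ m * (b ^ m * (m + 1 - b)) := by rw [pow_succ, mul_pow]; ring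

theorem prod_le_of_exists_le_of_exists_ge {ι : Type*} [Fintype ι] {lam : ι → ℝ}
    (hlam : ∀ i, 0 ≤ lam i) (hsum : ∑ i, lam i = Fintype.card ι) {μ : ℝ}
    (hlo : ∃ i, lam i ≤ μ) (hhi : ∃ i, μ ≤ lam i) :
    ∏ i, lam i ≤ μ * ((Fintype.card ι - μ) / (Fintype.card ι - 1)) ^ (Fintype.card ι - 1) := by
  classical
  obtain ⟨m, hm⟩ : ∃ m, Fintype.card ι = m + 1 :=
    Nat.exists_eq_add_one.mpr (Fintype.card_pos_iff.mpr ⟨hlo.choose⟩)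
  have hle : ∀ i, lam i ≤ m + 1 := fun i ↦ by
    simpa [hsum, hm] using single_le_sum (fun j _ ↦ hlam j) (mem_univ i)
  obtain ⟨j, hj, hμ₀, hμ₁⟩ : ∃ j, (lam j - μ) * (1 - μ) ≤ 0 ∧ 0 ≤ μ ∧ μ ≤ m + 1 := by
    obtain ⟨i, hi⟩ := hlo
    obtain ⟨k, hk⟩ := hhi
    rcases le_total μ 1 with hμ | hμ
    · exact ⟨i, mul_nonpos_of_nonpos_of_nonneg (by linarith) (by linarith),
        (hlam i).trans hi, by linarith⟩
    · exact ⟨k, mul_nonpos_of_nonneg_of_nonpos (by linarith) (by linarith),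
        by linarith, hk.trans (hle k)⟩
  have hprod := Real.prod_le_mul_arith_mean_pow_erase (fun i _ ↦ hlam i) (mem_univ j)
  rw [hsum, card_univ, hm, Nat.add_sub_cancel] at hprod
  rw [hm, Nat.add_sub_cancel]
  push_cast at hprod ⊢
  rw [add_sub_cancel_right]
  calc ∏ i, lam i ≤ lam j * ((m + 1 - lam j) / m) ^ m := hprod
    _ = lam j * (m + 1 - lam j) ^ m / m ^ m := by rw [div_pow, mul_div_assoc]
    _ ≤ μ * (m + 1 - μ) ^ m / m ^ m := by
      gcongr ?_ / _
      exact mul_sub_pow_le_mul_sub_pow m (hlam j) (hle j) hμ₀ hμ₁ hj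
    _ = μ * ((m + 1 - μ) / m) ^ m := by rw [div_pow, mul_div_assoc]

theorem Matrix.one_dotProduct_mulVec_one_eq_trace_add {ι R : Type*} [Fintype ι] [DecidableEq ι]
    [CommSemiring R] (A : Matrix ι ι R) :
    1 ⬝ᵥ (A *ᵥ 1) = A.trace + ∑ i, ∑ j ∈ univ.erase i, A i j := by
  simp only [dotProduct, mulVec, Pi.one_apply, one_mul, mul_one, trace, diag,
    ← sum_add_distrib, add_sum_erase _ _ (mem_univ _)]

namespace Matrix.IsHermitian

variable {ι : Type*} [Fintype ι] [DecidableEq ι] {A : Matrix ι ι ℝ} (hA : A.IsHermitian)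

theorem vecMul_eigenvectorUnitary (x : ι → ℝ) :
    x ᵥ* (hA.eigenvectorUnitary : Matrix ι ι ℝ) =
      star (hA.eigenvectorUnitary : Matrix ι ι ℝ) *ᵥ x := by
  rw [star_eq_conjTranspose, conjTranspose_eq_transpose_of_trivial, mulVec_transpose]

theorem dotProduct_mulVec_eq_sum_eigenvalues (x : ι → ℝ) :
    x ⬝ᵥ (A *ᵥ x) =
      ∑ i, hA.eigenvalues i * (star (hA.eigenvectorUnitary : Matrix ι ι ℝ) *ᵥ x) i ^ 2 := by
  conv_lhs => rw [hA.spectral_theorem, Unitary.conjStarAlgAut_apply]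
  rw [← mulVec_mulVec, ← mulVec_mulVec, dotProduct_mulVec, vecMul_eigenvectorUnitary]
  simp [mulVec_diagonal, dotProduct, sq, mul_left_comm]

theorem dotProduct_self_eq_sum_sq (x : ι → ℝ) :
    x ⬝ᵥ x = ∑ i, (star (hA.eigenvectorUnitary : Matrix ι ι ℝ) *ᵥ x) i ^ 2 := by
  calc x ⬝ᵥ x
      = x ⬝ᵥ ((hA.eigenvectorUnitary * star hA.eigenvectorUnitary : Matrix ι ι ℝ) *ᵥ x) := by
        rw [Unitary.coe_mul_star_self, one_mulVec]
    _ = _ := by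
      rw [← mulVec_mulVec, dotProduct_mulVec, vecMul_eigenvectorUnitary]
      simp [dotProduct, sq]

theorem dotProduct_mulVec_div_eq_centerMass (x : ι → ℝ) :
    x ⬝ᵥ (A *ᵥ x) / (x ⬝ᵥ x) = univ.centerMass
      (fun i ↦ (star (hA.eigenvectorUnitary : Matrix ι ι ℝ) *ᵥ x) i ^ 2) hA.eigenvalues := by
  rw [centerMass, hA.dotProduct_mulVec_eq_sum_eigenvalues, hA.dotProduct_self_eq_sum_sq]
  simp [div_eq_inv_mul, mul_comm]

theorem exists_eigenvalues_le_dotProduct_mulVec_div {x : ι → ℝ} (hx : x ≠ 0) :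
    (∃ i, hA.eigenvalues i ≤ x ⬝ᵥ (A *ᵥ x) / (x ⬝ᵥ x)) ∧
      ∃ i, x ⬝ᵥ (A *ᵥ x) / (x ⬝ᵥ x) ≤ hA.eigenvalues i := by
  have hw : ∀ i ∈ univ, 0 ≤ (star (hA.eigenvectorUnitary : Matrix ι ι ℝ) *ᵥ x) i ^ 2 :=
    fun i _ ↦ sq_nonneg _
  have hpos : 0 < ∑ i, (star (hA.eigenvectorUnitary : Matrix ι ι ℝ) *ᵥ x) i ^ 2 := by
    rw [← hA.dotProduct_self_eq_sum_sq]
    exact (dotProduct_self_star_nonneg x).lt_of_ne' (dotProduct_self_eq_zero.not.mpr hx)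
  rw [hA.dotProduct_mulVec_div_eq_centerMass]
  constructor
  · obtain ⟨i, -, hi⟩ := exists_mem_eq_inf' _ hA.eigenvalues
    exact ⟨i, hi ▸ inf_le_centerMass hw hpos⟩
  · obtain ⟨i, -, hi⟩ := exists_mem_eq_sup' _ hA.eigenvalues
    exact ⟨i, hi ▸ centerMass_le_sup hw hpos⟩

end Matrix.IsHermitian

theorem olkin_inequality (n : ℕ) (hn : 2 ≤ n) (R : Matrix (Fin n) (Fin n) ℝ)
    (hpsd : R.PosSemidef) (hdiag : ∀ i, R i i = 1)
    (r₁ : ℝ)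
    (hr₁ : r₁ = (∑ i, ∑ j ∈ Finset.univ.erase i, R i j) / (n * (n - 1))) :
    R.det ≤ (1 - r₁) ^ (n - 1) * (1 + (n - 1 : ℝ) * r₁) := by
  have hA := hpsd.isHermitian
  have : NeZero n := ⟨by omega⟩
  have hn' : (2 : ℝ) ≤ n := by exact_mod_cast hn
  have htrace : R.trace = n := by simp [trace, hdiag]
  have hoff : ∑ i, ∑ j ∈ univ.erase i, R i j = n * (n - 1) * r₁ := by
    rw [hr₁, mul_div_cancel₀]
    exact mul_ne_zero (by positivity) (by linarith)
  have hone : (1 : Fin n → ℝ) ⬝ᵥ 1 = n := by simp [dotProduct]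
  have hrayleigh : (1 : Fin n → ℝ) ⬝ᵥ (R *ᵥ 1) / ((1 : Fin n → ℝ) ⬝ᵥ 1) = 1 + (n - 1) * r₁ := by
    rw [one_dotProduct_mulVec_one_eq_trace_add, htrace, hoff, hone]
    field_simp
  obtain ⟨hlo, hhi⟩ := hA.exists_eigenvalues_le_dotProduct_mulVec_div (x := 1) one_ne_zero
  rw [hrayleigh] at hlo hhi
  have hsum : ∑ i, hA.eigenvalues i = n := by
    simpa [htrace] using hA.trace_eq_sum_eigenvalues.symm
  have hratio : ((n : ℝ) - (1 + (n - 1) * r₁)) / (n - 1) = 1 - r₁ := by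
    rw [div_eq_iff (by linarith)]
    ring
  calc R.det = ∏ i, hA.eigenvalues i := by simpa using hA.det_eq_prod_eigenvalues
    _ ≤ (1 + (n - 1) * r₁) * (((n : ℝ) - (1 + (n - 1) * r₁)) / (n - 1)) ^ (n - 1) := by
      simpa using prod_le_of_exists_le_of_exists_ge hpsd.eigenvalues_nonneg
        (by simpa using hsum) hlo hhi
    _ = _ := by rw [hratio, mul_comm]
end

section
/- Let R̂ = (1-r)I + rJ and R̄ = (1+r)I - rJ be n×n matrices (unit diagonal, off-diagonal entries r and -r respectively) with 0 ≤ r ≤ 1 and n ≥ 2. Then det R̄ ≤ det R̂, i.e., (1+r)^{n-1}(1-(n-1)r) ≤ (1-r)^{n-1}(1+(n-1)r). -/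
open Matrix

/-!
The determinant of `a • 1 + b • J` is the characteristic polynomial of the rank-one matrix
`-b • J` evaluated at `a`, i.e. `aⁿ + n b aⁿ⁻¹`. With `k = n - 1` both claims therefore reduce to
`(1 + r)ᵏ (1 - k r) ≤ (1 - r)ᵏ (1 + k r)`. The difference of the two sides vanishes at `r = 0` and
has derivative `k (k + 1) r ((1 + r)ᵏ⁻¹ - (1 - r)ᵏ⁻¹) ≥ 0` for `r ≥ 0`.
-/

theorem Matrix.det_scalar_add_of_const {R ι : Type*} [CommRing R] [Fintype ι] [DecidableEq ι]
    (a b : R) :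
    (scalar ι a + of fun _ _ => b).det =
      a ^ Fintype.card ι + Fintype.card ι * b * a ^ (Fintype.card ι - 1) := by
  have hvec : scalar ι a + of (fun _ _ => b) = scalar ι a - vecMulVec (fun _ => -b) (fun _ => 1) := by
    ext i j
    simp [vecMulVec_apply]
  rw [hvec, ← eval_charpoly, charpoly_vecMulVec]
  simp [dotProduct, sub_eq_add_neg]

theorem one_sub_pow_le_one_add_pow {x : ℝ} (hx : 0 ≤ x) (m : ℕ) : (1 - x) ^ m ≤ (1 + x) ^ m :=
  calc (1 - x) ^ m ≤ |1 - x| ^ m := by rw [← abs_pow]; exact le_abs_self _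
    _ ≤ (1 + x) ^ m :=
      pow_le_pow_left₀ (abs_nonneg _) (abs_sub_le_iff.2 ⟨by linarith, by linarith⟩) m

theorem one_add_pow_mul_one_sub_le_one_sub_pow_mul_one_add (k : ℕ) {r : ℝ} (hr : 0 ≤ r) :
    (1 + r) ^ k * (1 - k * r) ≤ (1 - r) ^ k * (1 + k * r) := by
  rcases k with _ | m
  · simp
  set f : ℝ → ℝ := fun x =>
    (1 - x) ^ (m + 1) * (1 + (m + 1) * x) - (1 + x) ^ (m + 1) * (1 - (m + 1) * x)
  have hf : ∀ x, HasDerivAt f ((m + 1) * (m + 2) * x * ((1 + x) ^ m - (1 - x) ^ m)) x := by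
    intro x
    have hid := hasDerivAt_id' x
    have hkx := hid.const_mul ((m : ℝ) + 1)
    refine (((hid.const_sub 1).fun_pow (m + 1)).fun_mul (hkx.const_add 1)).fun_sub
      (((hid.const_add 1).fun_pow (m + 1)).fun_mul (hkx.const_sub 1)) |>.congr_deriv ?_
    push_cast
    ring
  have hmono : MonotoneOn f (Set.Ici 0) := by
    refine monotoneOn_of_deriv_nonneg (convex_Ici 0)
      (fun x _ => (hf x).continuousAt.continuousWithinAt)
      (fun x _ => (hf x).differentiableAt.differentiableWithinAt) fun x hx => ?_
    rw [interior_Ici, Set.mem_Ioi] at hx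
    have hpow : 0 ≤ (1 + x) ^ m - (1 - x) ^ m := sub_nonneg.2 (one_sub_pow_le_one_add_pow hx.le m)
    rw [(hf x).deriv]
    positivity
  have hf0 := hmono Set.self_mem_Ici hr hr
  simp only [f, sub_zero, add_zero, mul_zero, one_pow, mul_one, sub_self, sub_nonneg] at hf0
  exact_mod_cast hf0

theorem det_Rbar_le_det_Rhat_general (n : ℕ) (hn : 2 ≤ n) (r : ℝ) (hr0 : 0 ≤ r)
    (Rhat Rbar : Matrix (Fin n) (Fin n) ℝ)
    (hRhat : Rhat = Matrix.of fun i j => if i = j then 1 else r)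
    (hRbar : Rbar = Matrix.of fun i j => if i = j then 1 else -r) :
    Rbar.det ≤ Rhat.det ∧
      (1 + r) ^ (n - 1) * (1 - (n - 1 : ℝ) * r) ≤
        (1 - r) ^ (n - 1) * (1 + (n - 1 : ℝ) * r) := by
  obtain ⟨k, rfl⟩ : ∃ k, n = k + 1 := ⟨n - 1, by omega⟩
  have hineq := one_add_pow_mul_one_sub_le_one_sub_pow_mul_one_add k hr0
  have hRhat_scalar : Rhat = scalar _ (1 - r) + of fun _ _ => r := by
    ext i j; by_cases h : i = j <;> simp [hRhat, h]
  have hRbar_scalar : Rbar = scalar _ (1 + r) + of fun _ _ => -r := by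
    ext i j; by_cases h : i = j <;> simp [hRbar, h]
  rw [hRhat_scalar, hRbar_scalar, det_scalar_add_of_const, det_scalar_add_of_const, Fintype.card_fin]
  push_cast
  simp only [add_sub_cancel_right]
  exact ⟨by convert hineq using 1 <;> ring, hineq⟩

theorem det_Rbar_le_det_Rhat (n : ℕ) (hn : 2 ≤ n) (r : ℝ) (hr0 : 0 ≤ r) (hr1 : r ≤ 1)
    (Rhat Rbar : Matrix (Fin n) (Fin n) ℝ)
    (hRhat : Rhat = Matrix.of fun i j => if i = j then 1 else r)
    (hRbar : Rbar = Matrix.of fun i j => if i = j then 1 else -r) :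
    Rbar.det ≤ Rhat.det ∧
      (1 + r) ^ (n - 1) * (1 - (n - 1 : ℝ) * r) ≤
        (1 - r) ^ (n - 1) * (1 + (n - 1 : ℝ) * r) :=
  det_Rbar_le_det_Rhat_general n hn r hr0 Rhat Rbar hRhat hRbar
end
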